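/- Proposition C.5 (the tilted likelihood preserves the MLE and the tempered LAN condition). Let (α_n) be a positive sequence with α_n → 0 and α_n·n → ∞, and let (α̂_n) be positive random variables with α̂_n/α_n → 1 in P_n-probability. Define the tilted likelihood f̃_n(X^n|θ) := f_n(X^n|θ)^{α̂_n/α_n}. Assume f_n satisfies (A0) and (A2), with matrix V and Δ_n := √n(θ̂ − θ*). Then: (i) θ̂ is also the unique maximizer of θ ↦ f̃_n(X^n|θ), so f̃_n satisfies (A0) with the same θ̂ and θ*; and (ii) f̃_n satisfies (A2) with the same V and Δ_n, i.e., setting R̃_n(h) := α_n·[log f̃_n(X^n|θ* + h/√(α_n n)) − log f̃_n(X^n|θ*)] − √α_n·hᵀVΔ_n + (1/2)·hᵀVh, one has sup_{‖h‖₂ ≤ r} |R̃_n(h)| → 0 in P_n-probability for every r > 0. -/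

import Mathlib

open MeasureTheory Filter BigOperators

noncomputable section

/-- Multivariate Gaussian density `φ(θ | μ, S)` with mean `μ` and covariance matrix `S`. -/
def gaussDensity (p : ℕ) (μ : EuclideanSpace ℝ (Fin p))
    (S : Matrix (Fin p) (Fin p) ℝ) (θ : EuclideanSpace ℝ (Fin p)) : ℝ :=
  (2 * Real.pi) ^ (-(p : ℝ) / 2) * S.det ^ (-(1 : ℝ) / 2) *
    Real.exp (-(1 / 2) * ∑ i, ∑ j, (θ i - μ i) * S⁻¹ i j * (θ j - μ j))

/-- The tempered (`α`-)posterior density. -/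
def post {p : ℕ} {Ω : Type} (L : Ω → EuclideanSpace ℝ (Fin p) → ℝ)
    (prior : EuclideanSpace ℝ (Fin p) → ℝ) (α : ℝ) (ω : Ω)
    (θ : EuclideanSpace ℝ (Fin p)) : ℝ :=
  L ω θ ^ α * prior θ / ∫ θ', L ω θ' ^ α * prior θ'

/-- Convergence in `P n`-probability of a sequence of random vectors to a constant. -/
def TendstoInProb {Ω : ℕ → Type} [∀ n, MeasurableSpace (Ω n)]
    (P : ∀ n, Measure (Ω n)) {E : Type*} [NormedAddCommGroup E]
    (Y : ∀ n, Ω n → E) (y : E) : Prop :=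
  ∀ ε : ℝ, 0 < ε →
    Tendsto (fun n => P n {ω | ε < ‖Y n ω - y‖}) atTop (nhds 0)

/-- Assumption (A0): consistency and asymptotic normality of the MLE. -/
def A0 {p : ℕ} {Ω : ℕ → Type} [∀ n, MeasurableSpace (Ω n)] (P : ∀ n, Measure (Ω n))
    (θhat : ∀ n, Ω n → EuclideanSpace ℝ (Fin p)) (θstar : EuclideanSpace ℝ (Fin p)) : Prop :=
  TendstoInProb P θhat θstar ∧
  ∃ S : Matrix (Fin p) (Fin p) ℝ, S.IsSymm ∧ S.PosDef ∧
    ∀ f : EuclideanSpace ℝ (Fin p) → ℝ, Continuous f → (∃ C, ∀ x, |f x| ≤ C) →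
      Tendsto (fun n => ∫ ω, f ((Real.sqrt n) • (θhat n ω - θstar)) ∂ P n) atTop
        (nhds (∫ x, f x * gaussDensity p 0 S x))

/-- Assumption (A1): the prior is continuous and positive near `θstar`. -/
def A1 {p : ℕ} (prior : EuclideanSpace ℝ (Fin p) → ℝ)
    (θstar : EuclideanSpace ℝ (Fin p)) : Prop :=
  ∃ δ : ℝ, 0 < δ ∧ ContinuousOn prior (Metric.ball θstar δ) ∧
    ∀ θ ∈ Metric.ball θstar δ, 0 < prior θ

/-- Assumption (A2): tempered local asymptotic normality with matrix `V`. -/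
def A2 {p : ℕ} {Ω : ℕ → Type} [∀ n, MeasurableSpace (Ω n)] (P : ∀ n, Measure (Ω n))
    (L : ∀ n, Ω n → EuclideanSpace ℝ (Fin p) → ℝ)
    (θhat : ∀ n, Ω n → EuclideanSpace ℝ (Fin p)) (θstar : EuclideanSpace ℝ (Fin p))
    (α : ℕ → ℝ) (V : Matrix (Fin p) (Fin p) ℝ) : Prop :=
  V.IsSymm ∧ V.PosDef ∧
  ∀ r : ℝ, 0 < r → ∀ ε : ℝ, 0 < ε →
    Tendsto (fun n => P n {ω | ∃ h : EuclideanSpace ℝ (Fin p), ‖h‖ ≤ r ∧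
      ε < |α n * (Real.log (L n ω (θstar + (Real.sqrt (α n * (n : ℝ)))⁻¹ • h)) -
              Real.log (L n ω θstar))
            - Real.sqrt (α n) *
                ∑ i, ∑ j, h i * V i j * (Real.sqrt n * (θhat n ω j - θstar j))
            + (1 / 2) * ∑ i, ∑ j, h i * V i j * h j|}) atTop (nhds 0)

/-- Assumption (A3): all rescaled posterior moments are bounded in probability. -/
def A3 {p : ℕ} {Ω : ℕ → Type} [∀ n, MeasurableSpace (Ω n)] (P : ∀ n, Measure (Ω n))
    (L : ∀ n, Ω n → EuclideanSpace ℝ (Fin p) → ℝ)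
    (prior : EuclideanSpace ℝ (Fin p) → ℝ) (θstar : EuclideanSpace ℝ (Fin p))
    (α : ℕ → ℝ) : Prop :=
  ∀ ε : ℝ, 0 < ε → ∀ k₀ : ℝ, 0 ≤ k₀ → ∃ M : ℝ, ∃ N : ℕ, ∀ n : ℕ,
    (N : ℝ) ≤ α n * n →
    P n {ω | M < ∫ θ, ‖Real.sqrt (α n * (n : ℝ)) • (θ - θstar)‖ ^ k₀ *
        post (L n) prior (α n) ω θ} < ENNReal.ofReal ε

/-- Conditions 1 and 2 (with a common radius `r`): salience of the pseudo-true parameter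
and local quadratic behavior of the log-likelihood near the MLE. -/
def Conds12 {p : ℕ} {Ω : ℕ → Type} [∀ n, MeasurableSpace (Ω n)] (P : ∀ n, Measure (Ω n))
    (L : ∀ n, Ω n → EuclideanSpace ℝ (Fin p) → ℝ)
    (θhat : ∀ n, Ω n → EuclideanSpace ℝ (Fin p))
    (θstar : EuclideanSpace ℝ (Fin p)) : Prop :=
  ∃ Lc c₀ c₁ c₂ r : ℝ, ∃ γfun : ℝ → ℝ,
    0 < Lc ∧ 0 < c₀ ∧ 0 < c₁ ∧ 0 ≤ c₂ ∧ Real.exp (c₂ / c₀) / c₁ < r ∧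
    (∀ v : ℝ, 0 ≤ v → 0 ≤ γfun v) ∧
    (∀ v : ℝ, r ≤ v → c₀ * Real.log (1 + c₁ * v) - c₂ ≤ γfun v) ∧
    Tendsto (fun n => P n {ω | ∀ θ, r ≤ ‖θ - θstar‖ →
        Real.log (L n ω θ) - Real.log (L n ω θstar) ≤
          -(Lc * (n : ℝ) * γfun ‖θ - θstar‖)}) atTop (nhds 1) ∧
    ∃ c₃ c₄ : ℝ, 0 < c₃ ∧ 0 < c₄ ∧
      Tendsto (fun n => P n {ω | ∀ θ, ‖θ - θhat n ω‖ < 2 * r →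
          -((n : ℝ) * c₃ * ‖θ - θhat n ω‖ ^ 2) ≤
              Real.log (L n ω θ) - Real.log (L n ω (θhat n ω)) ∧
            Real.log (L n ω θ) - Real.log (L n ω (θhat n ω)) ≤
              -((n : ℝ) * c₄ * ‖θ - θhat n ω‖ ^ 2)}) atTop (nhds 1)


/-- Assumption (A1'): the prior is positive and C² near `θstar`, with finite mean. -/
def A1' {p : ℕ} (prior : EuclideanSpace ℝ (Fin p) → ℝ)
    (θstar : EuclideanSpace ℝ (Fin p)) : Prop :=
  (∃ δ : ℝ, 0 < δ ∧ (∀ θ ∈ Metric.ball θstar δ, 0 < prior θ) ∧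
    ContDiffOn ℝ 2 prior (Metric.ball θstar δ)) ∧
  Integrable (fun θ : EuclideanSpace ℝ (Fin p) => ‖θ‖ * prior θ)

/-- Assumption (A2'): higher-order tempered LAN centered at the MLE, with data `H` and `S`. -/
def A2' {p : ℕ} {Ω : ℕ → Type} [∀ n, MeasurableSpace (Ω n)] (P : ∀ n, Measure (Ω n))
    (L : ∀ n, Ω n → EuclideanSpace ℝ (Fin p) → ℝ)
    (θhat : ∀ n, Ω n → EuclideanSpace ℝ (Fin p)) (α : ℕ → ℝ)
    (H : ∀ n, Ω n → Matrix (Fin p) (Fin p) ℝ)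
    (S : ∀ n, Ω n → Fin p → Fin p → Fin p → ℝ) : Prop :=
  Tendsto (fun n => P n {ω | (H n ω).IsSymm ∧ (H n ω).PosDef}) atTop (nhds 1) ∧
  ∃ M : ℝ, ∃ δ : ℝ, 0 < δ ∧ ∀ ε : ℝ, 0 < ε → ∃ N : ℕ, ∀ n ≥ N,
    P n {ω | ∃ h : EuclideanSpace ℝ (Fin p), ‖h‖ ≤ δ * Real.sqrt (α n * (n : ℝ)) ∧
      (M / (α n * (n : ℝ))) * ‖h‖ ^ 4 <
        α n * (Real.log (L n ω (θhat n ω + (Real.sqrt (α n * (n : ℝ)))⁻¹ • h)) -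
            Real.log (L n ω (θhat n ω)))
          + (1 / 2) * ∑ i, ∑ j, h i * H n ω i j * h j
          - (6 * Real.sqrt (α n * (n : ℝ)))⁻¹ *
              ∑ i, ∑ j, ∑ k, S n ω i j k * h i * h j * h k} < ENNReal.ofReal ε

/-- Assumption (A3'): salience of the MLE. -/
def A3' {p : ℕ} {Ω : ℕ → Type} [∀ n, MeasurableSpace (Ω n)] (P : ∀ n, Measure (Ω n))
    (L : ∀ n, Ω n → EuclideanSpace ℝ (Fin p) → ℝ)
    (θhat : ∀ n, Ω n → EuclideanSpace ℝ (Fin p)) : Prop :=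
  ∀ ε : ℝ, 0 < ε → ∀ δ' : ℝ, 0 < δ' → ∃ c : ℝ, 0 < c ∧ ∃ N : ℕ, ∀ n ≥ N,
    P n {ω | ∃ θ, δ' ≤ ‖θ - θhat n ω‖ ∧
      -c < (n : ℝ)⁻¹ * (Real.log (L n ω θ) - Real.log (L n ω (θhat n ω)))}
      < ENNReal.ofReal ε

/-- Condition (ALap) for the function `b` in the Laplace approximation. -/
def ALap {p : ℕ} {Ω : ℕ → Type} [∀ n, MeasurableSpace (Ω n)] (P : ∀ n, Measure (Ω n))
    (θhat : ∀ n, Ω n → EuclideanSpace ℝ (Fin p)) (θstar : EuclideanSpace ℝ (Fin p))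
    (α : ℕ → ℝ) (b : EuclideanSpace ℝ (Fin p) → ℝ) : Prop :=
  Integrable b ∧
  (∃ δ : ℝ, 0 < δ ∧ ∃ C : ℝ, ∀ θ ∈ Metric.ball θstar δ, |b θ| ≤ C) ∧
  ∃ v : ∀ n, Ω n → EuclideanSpace ℝ (Fin p), ∃ M : ℝ, ∃ δ : ℝ, 0 < δ ∧
    ∀ ε : ℝ, 0 < ε → ∃ N : ℕ, ∀ n ≥ N,
      P n {ω | ∃ h : EuclideanSpace ℝ (Fin p), ‖h‖ ≤ δ * Real.sqrt (α n * (n : ℝ)) ∧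
        (∑ i, v n ω i * h i) / Real.sqrt (α n * (n : ℝ)) + (M / (α n * (n : ℝ))) * ‖h‖ ^ 2 <
          b (θhat n ω + (Real.sqrt (α n * (n : ℝ)))⁻¹ • h) - b (θhat n ω)}
        < ENNReal.ofReal ε

/-- The posterior mean as a vector in Euclidean space. -/
def postMean {p : ℕ} {Ω : Type} (L : Ω → EuclideanSpace ℝ (Fin p) → ℝ)
    (prior : EuclideanSpace ℝ (Fin p) → ℝ) (α : ℝ) (ω : Ω) :
    EuclideanSpace ℝ (Fin p) :=
  (WithLp.equiv 2 (Fin p → ℝ)).symm (fun j => ∫ θ, θ j * post L prior α ω θ)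

/-- A coupling of two measures. -/
def IsCoupling {X : Type} [MeasurableSpace X] (μ ν : Measure X)
    (γ : Measure (X × X)) : Prop :=
  IsProbabilityMeasure γ ∧ γ.map Prod.fst = μ ∧ γ.map Prod.snd = ν

/-- The `s`-Wasserstein distance. -/
def wassersteinDist {X : Type} [MeasurableSpace X] [PseudoMetricSpace X]
    (s : ℝ) (μ ν : Measure X) : ℝ :=
  sInf {c : ℝ | ∃ γ : Measure (X × X), IsCoupling μ ν γ ∧
    c = (∫ x : X × X, dist x.1 x.2 ^ s ∂γ) ^ (1 / s)}

/-- The total variation distance between two measures. -/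
def tvDist {X : Type} [MeasurableSpace X] (μ ν : Measure X) : ℝ :=
  sSup {x : ℝ | ∃ A : Set X, MeasurableSet A ∧ x = |(μ A).toReal - (ν A).toReal|}

/-- Standard basis vector of Euclidean space. -/
def basisE (p : ℕ) (i : Fin p) : EuclideanSpace ℝ (Fin p) :=
  EuclideanSpace.single i (1 : ℝ)

/-- First directional partial derivative. -/
def d1 {p : ℕ} (g : EuclideanSpace ℝ (Fin p) → ℝ) (θ : EuclideanSpace ℝ (Fin p))
    (i : Fin p) : ℝ :=
  fderiv ℝ g θ (basisE p i)

/-- Second-order partial derivative. -/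
def d2 {p : ℕ} (g : EuclideanSpace ℝ (Fin p) → ℝ) (θ : EuclideanSpace ℝ (Fin p))
    (i j : Fin p) : ℝ :=
  fderiv ℝ (fun θ' => d1 g θ' j) θ (basisE p i)

/-- Third-order partial derivative. -/
def d3 {p : ℕ} (g : EuclideanSpace ℝ (Fin p) → ℝ) (θ : EuclideanSpace ℝ (Fin p))
    (i j k : Fin p) : ℝ :=
  fderiv ℝ (fun θ' => d2 g θ' j k) θ (basisE p i)

/-- Fourth-order partial derivative. -/
def d4 {p : ℕ} (g : EuclideanSpace ℝ (Fin p) → ℝ) (θ : EuclideanSpace ℝ (Fin p))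
    (i j k l : Fin p) : ℝ :=
  fderiv ℝ (fun θ' => d3 g θ' j k l) θ (basisE p i)


/-! The tilted log-likelihood is `c = α̂/α` times the original one, so its LAN remainder is
`R̃ = c R + (c - 1) B`, where `R` is the LAN remainder of `f` and `B = √α hᵀVΔ - hᵀVh / 2` is the
LAN approximation itself. Since `R → 0` and `c → 1` in probability, it suffices that `B` is bounded
in probability uniformly over `‖h‖ ≤ r`; this follows from `‖Δ‖` being bounded in probability,
which is the tightness of a sequence converging weakly to a Gaussian law (A0). -/

open scoped ENNReal Topology

theorem abs_sum_sum_mul_le {ι κ : Type*} [Fintype ι] [Fintype κ] (A : Matrix ι κ ℝ)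
    (x : EuclideanSpace ℝ ι) (y : EuclideanSpace ℝ κ) :
    |∑ i, ∑ j, x i * A i j * y j| ≤ (∑ i, ∑ j, |A i j|) * (‖x‖ * ‖y‖) := by
  calc |∑ i, ∑ j, x i * A i j * y j| ≤ ∑ i, ∑ j, |x i * A i j * y j| :=
        (Finset.abs_sum_le_sum_abs _ _).trans
          (Finset.sum_le_sum fun i _ => Finset.abs_sum_le_sum_abs _ _)
    _ ≤ ∑ i, ∑ j, |A i j| * (‖x‖ * ‖y‖) := by
        gcongr with i _ j _
        rw [abs_mul, abs_mul, ← Real.norm_eq_abs (x i), ← Real.norm_eq_abs (y j),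
          mul_comm _ |A i j|, mul_assoc]
        gcongr <;> exact PiLp.norm_apply_le _ _
    _ = (∑ i, ∑ j, |A i j|) * (‖x‖ * ‖y‖) := by simp only [Finset.sum_mul]

section InProbability

variable {Ω : ℕ → Type} [∀ n, MeasurableSpace (Ω n)] {P : ∀ n, Measure (Ω n)}

def BoundedInProb (P : ∀ n, Measure (Ω n)) {E : Type*} [Norm E] (X : ∀ n, Ω n → E) : Prop :=
  ∀ η : ℝ≥0∞, 0 < η → ∃ M : ℝ, ∀ᶠ n in atTop, P n {ω | M < ‖X n ω‖} ≤ η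

def UniformlyBoundedInProb (P : ∀ n, Measure (Ω n)) {ι : Type*} (s : Set ι)
    (X : ∀ n, Ω n → ι → ℝ) : Prop :=
  ∀ η : ℝ≥0∞, 0 < η → ∃ M : ℝ, ∀ᶠ n in atTop, P n {ω | ∃ i ∈ s, M < |X n ω i|} ≤ η

def UniformlyTendstoZeroInProb (P : ∀ n, Measure (Ω n)) {ι : Type*} (s : Set ι)
    (X : ∀ n, Ω n → ι → ℝ) : Prop :=
  ∀ ε : ℝ, 0 < ε → Tendsto (fun n => P n {ω | ∃ i ∈ s, ε < |X n ω i|}) atTop (𝓝 0)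

theorem boundedInProb_of_tendsto_integral_mul {E : Type*} [NormedAddCommGroup E]
    [MeasurableSpace E] [OpensMeasurableSpace E] [∀ n, IsProbabilityMeasure (P n)]
    {ν : Measure E} {g : E → ℝ} {Y : ∀ n, Ω n → E} (hY : ∀ n, Measurable (Y n))
    (hlim : ∀ f : E → ℝ, Continuous f → (∃ C, ∀ x, |f x| ≤ C) →
      Tendsto (fun n => ∫ ω, f (Y n ω) ∂P n) atTop (𝓝 (∫ x, f x * g x ∂ν))) :
    BoundedInProb P Y := by
  have hg : Integrable g ν := by
    by_contra hg
    have h1 := hlim (fun _ => 1) continuous_const ⟨1, fun _ => by norm_num⟩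
    simp [integral_undef hg] at h1
  -- `P (k + 1 < ‖Y‖) ≤ ∫ G k ∘ Y → ∫ G k * g`, and the last integral is small for large `k`
  -- by dominated convergence
  set G : ℕ → E → ℝ := fun k x => min 1 (max 0 (‖x‖ - k))
  have hGcont (k : ℕ) : Continuous (G k) := by fun_prop
  have hG_nonneg (k : ℕ) (x : E) : 0 ≤ G k x := le_min zero_le_one (le_max_left _ _)
  have hG_le_one (k : ℕ) (x : E) : G k x ≤ 1 := min_le_left _ _
  have hGlim : Tendsto (fun k => ∫ x, G k x * g x ∂ν) atTop (𝓝 0) := by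
    rw [← integral_zero E ℝ]
    refine tendsto_integral_of_dominated_convergence (fun x => |g x|)
      (fun k => ((hGcont k).aestronglyMeasurable).mul hg.aestronglyMeasurable) hg.abs
      (fun k => ae_of_all _ fun x => ?_) (ae_of_all _ fun x => ?_)
    · rw [norm_mul, Real.norm_of_nonneg (hG_nonneg k x), Real.norm_eq_abs]
      exact mul_le_of_le_one_left (abs_nonneg _) (hG_le_one k x)
    · refine tendsto_const_nhds.congr' ?_
      filter_upwards [eventually_ge_atTop ⌈‖x‖⌉₊] with k hk
      have : ‖x‖ - k ≤ 0 := sub_nonpos.mpr ((Nat.le_ceil _).trans (by exact_mod_cast hk))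
      simp [G, max_eq_left this]
  intro η hη
  obtain ⟨t, -, ht0, htη⟩ := ENNReal.lt_iff_exists_real_btwn.mp hη
  obtain ⟨k, hk⟩ := (hGlim.eventually (gt_mem_nhds (ENNReal.ofReal_pos.mp ht0))).exists
  refine ⟨k + 1, ?_⟩
  filter_upwards [(hlim (G k) (hGcont k) ⟨1, fun x => by
    rw [abs_of_nonneg (hG_nonneg k x)]; exact hG_le_one k x⟩).eventually (gt_mem_nhds hk)]
    with n hn
  have hGY : Integrable (fun ω => G k (Y n ω)) (P n) :=
    (integrable_const (1 : ℝ)).mono' ((hGcont k).measurable.comp (hY n)).aestronglyMeasurable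
      (ae_of_all _ fun ω => by
        rw [Real.norm_of_nonneg (hG_nonneg k _)]; exact hG_le_one k _)
  calc P n {ω | (k + 1 : ℝ) < ‖Y n ω‖}
      ≤ P n {ω | 1 ≤ G k (Y n ω)} := measure_mono fun ω hω => by
        have : 1 ≤ ‖Y n ω‖ - k := by simp only [Set.mem_ofPred_eq] at hω; linarith
        simp [G, this]
    _ = ENNReal.ofReal ((P n).real {ω | 1 ≤ G k (Y n ω)}) := (ofReal_measureReal).symm
    _ ≤ ENNReal.ofReal (∫ ω, G k (Y n ω) ∂P n) := ENNReal.ofReal_le_ofReal <| by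
        simpa using mul_meas_ge_le_integral_of_nonneg
          (ae_of_all _ fun ω => hG_nonneg k (Y n ω)) hGY 1
    _ ≤ ENNReal.ofReal t := ENNReal.ofReal_le_ofReal hn.le
    _ ≤ η := htη.le

theorem BoundedInProb.uniformlyBoundedInProb {E : Type*} [Norm E] {Y : ∀ n, Ω n → E}
    (hY : BoundedInProb P Y) {ι : Type*} {s : Set ι} {X : ∀ n, Ω n → ι → ℝ} {a b : ℝ}
    (ha : 0 ≤ a) (hXY : ∀ᶠ n in atTop, ∀ ω, ∀ i ∈ s, |X n ω i| ≤ a * ‖Y n ω‖ + b) :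
    UniformlyBoundedInProb P s X := by
  intro η hη
  obtain ⟨M, hM⟩ := hY η hη
  refine ⟨a * M + b, ?_⟩
  filter_upwards [hM, hXY] with n hn hle
  refine (measure_mono ?_).trans hn
  rintro ω ⟨i, hi, hlt⟩
  by_contra hYM
  have := mul_le_mul_of_nonneg_left (not_lt.mp hYM) ha
  linarith [hle ω i hi]

theorem UniformlyTendstoZeroInProb.mul_add_sub_one_mul {ι : Type*} {s : Set ι}
    {R B : ∀ n, Ω n → ι → ℝ} {c : ∀ n, Ω n → ℝ}
    (hR : UniformlyTendstoZeroInProb P s R) (hc : TendstoInProb P c (1 : ℝ))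
    (hB : UniformlyBoundedInProb P s B) :
    UniformlyTendstoZeroInProb P s fun n ω i => c n ω * R n ω i + (c n ω - 1) * B n ω i := by
  intro ε hε
  rw [ENNReal.tendsto_nhds_zero]
  intro η hη
  have hη3 : 0 < η / 3 := ENNReal.div_pos hη.ne' ENNReal.ofNat_ne_top
  obtain ⟨M, hM⟩ := hB _ hη3
  set K := max M 1
  have hK : 0 < K := lt_max_of_lt_right one_pos
  set δ := min 1 (ε / (2 * K))
  have hδ : 0 < δ := lt_min one_pos (by positivity)
  have hδK : δ * K ≤ ε / 2 := by
    calc δ * K ≤ ε / (2 * K) * K := by gcongr; exact min_le_right _ _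
      _ = ε / 2 := by field_simp
  filter_upwards [hM, (ENNReal.tendsto_nhds_zero.mp (hR (ε / 4) (by positivity))) _ hη3,
    (ENNReal.tendsto_nhds_zero.mp (hc δ hδ)) _ hη3] with n hBn hRn hcn
  have hsub : {ω | ∃ i ∈ s, ε < |c n ω * R n ω i + (c n ω - 1) * B n ω i|} ⊆
      {ω | ∃ i ∈ s, ε / 4 < |R n ω i|} ∪ {ω | δ < ‖c n ω - 1‖} ∪
        {ω | ∃ i ∈ s, M < |B n ω i|} := by
    rintro ω ⟨i, hi, hlt⟩
    by_contra hω
    simp only [Set.mem_union, Set.mem_ofPred_eq, not_or, not_exists, not_and, not_lt,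
      Real.norm_eq_abs] at hω
    obtain ⟨⟨hRle, hcle⟩, hBle⟩ := hω
    have hR4 : |R n ω i| ≤ ε / 4 := hRle i hi
    have hc2 : |c n ω| ≤ 2 := by
      have := abs_le.mp (hcle.trans (min_le_left _ _)); rw [abs_le]; constructor <;> linarith
    have hBK : |B n ω i| ≤ K := (hBle i hi).trans (le_max_left _ _)
    have : |c n ω * R n ω i + (c n ω - 1) * B n ω i| ≤ ε := by
      calc |c n ω * R n ω i + (c n ω - 1) * B n ω i|
          ≤ |c n ω| * |R n ω i| + |c n ω - 1| * |B n ω i| := by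
            rw [← abs_mul, ← abs_mul]; exact abs_add_le _ _
        _ ≤ 2 * (ε / 4) + δ * K := by gcongr
        _ ≤ ε := by linarith
    linarith
  calc P n _ ≤ P n ({ω | ∃ i ∈ s, ε / 4 < |R n ω i|} ∪ {ω | δ < ‖c n ω - 1‖} ∪
        {ω | ∃ i ∈ s, M < |B n ω i|}) := measure_mono hsub
    _ ≤ P n {ω | ∃ i ∈ s, ε / 4 < |R n ω i|} + P n {ω | δ < ‖c n ω - 1‖} +
        P n {ω | ∃ i ∈ s, M < |B n ω i|} :=
      (measure_union_le _ _).trans (add_le_add_left (measure_union_le _ _) _)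
    _ ≤ η / 3 + η / 3 + η / 3 := by gcongr
    _ = η := ENNReal.add_thirds η

theorem uniformlyBoundedInProb_lan_approx {ι : Type*} [Fintype ι] (A : Matrix ι ι ℝ)
    {a : ℕ → ℝ} (ha : ∀ᶠ n in atTop, a n ≤ 1) {Δ : ∀ n, Ω n → EuclideanSpace ℝ ι}
    (hΔ : BoundedInProb P Δ) (r : ℝ) :
    UniformlyBoundedInProb P {h : EuclideanSpace ℝ ι | ‖h‖ ≤ r} fun n ω h =>
      Real.sqrt (a n) * ∑ i, ∑ j, h i * A i j * Δ n ω j -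
        (1 / 2) * ∑ i, ∑ j, h i * A i j * h j := by
  set K := ∑ i, ∑ j, |A i j|
  have hK : 0 ≤ K := by positivity
  refine hΔ.uniformlyBoundedInProb (a := K * |r|) (b := K * (r * r) / 2) (by positivity) ?_
  filter_upwards [ha] with n han ω h (hh : ‖h‖ ≤ r)
  have hT := abs_sum_sum_mul_le A h (Δ n ω)
  have hQ := abs_sum_sum_mul_le A h h
  have hsqrt : Real.sqrt (a n) ≤ 1 := Real.sqrt_le_one.mpr han
  have hhr : ‖h‖ ≤ |r| := hh.trans (le_abs_self r)
  have hhh : ‖h‖ * ‖h‖ ≤ r * r := mul_self_le_mul_self (norm_nonneg h) hh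
  calc _ ≤ |Real.sqrt (a n) * ∑ i, ∑ j, h i * A i j * Δ n ω j| +
        |(1 / 2) * ∑ i, ∑ j, h i * A i j * h j| := abs_sub _ _
    _ ≤ 1 * (K * (‖h‖ * ‖Δ n ω‖)) + 1 / 2 * (K * (‖h‖ * ‖h‖)) := by
        rw [abs_mul, abs_mul, abs_of_nonneg (Real.sqrt_nonneg _),
          abs_of_nonneg (by norm_num : (0 : ℝ) ≤ 1 / 2)]
        gcongr
    _ ≤ K * |r| * ‖Δ n ω‖ + K * (r * r) / 2 := by
        have := mul_le_mul_of_nonneg_right hhr (norm_nonneg (Δ n ω))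
        nlinarith [mul_le_mul_of_nonneg_left this hK, mul_le_mul_of_nonneg_left hhh hK]

theorem A0.boundedInProb {p : ℕ} [∀ n, IsProbabilityMeasure (P n)]
    {θhat : ∀ n, Ω n → EuclideanSpace ℝ (Fin p)} {θstar : EuclideanSpace ℝ (Fin p)}
    (hθ : ∀ n, Measurable (θhat n)) (h : A0 P θhat θstar) :
    BoundedInProb P fun n ω => Real.sqrt n • (θhat n ω - θstar) := by
  obtain ⟨-, S, -, -, hlim⟩ := h
  exact boundedInProb_of_tendsto_integral_mul (fun n => by fun_prop) hlim

end InProbability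

theorem tilted_likelihood_preserves_MLE_and_LAN_general
    {p : ℕ} {Ω : ℕ → Type} [∀ n, MeasurableSpace (Ω n)]
    (P : ∀ n, Measure (Ω n)) [∀ n, IsProbabilityMeasure (P n)]
    (L : ∀ n, Ω n → EuclideanSpace ℝ (Fin p) → ℝ)
    (θhat : ∀ n, Ω n → EuclideanSpace ℝ (Fin p))
    (θstar : EuclideanSpace ℝ (Fin p))
    (V : Matrix (Fin p) (Fin p) ℝ)
    (α : ℕ → ℝ) (αhat : ∀ n, Ω n → ℝ)
    (hLpos : ∀ n ω θ, 0 < L n ω θ)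
    (hθmeas : ∀ n, Measurable (θhat n))
    (hMLE : ∀ n ω θ, θ ≠ θhat n ω → L n ω θ < L n ω (θhat n ω))
    -- tempering sequence: `α n → 0` and `α n * n → ∞`
    (hαpos : ∀ n, 0 < α n)
    (hα0 : Tendsto α atTop (nhds 0))
    -- data-dependent tempering with `αhat / α → 1` in probability
    (hαhatpos : ∀ n ω, 0 < αhat n ω)
    (hratio : TendstoInProb P (fun n ω => αhat n ω / α n) (1 : ℝ))
    -- assumptions (A0) and (A2) for `f_n`
    (hA0 : A0 P θhat θstar)
    (hA2 : A2 P L θhat θstar α V) :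
    -- (i) `θ̂` is the unique maximizer of the tilted likelihood
    (∀ n ω θ, θ ≠ θhat n ω →
      L n ω θ ^ (αhat n ω / α n) < L n ω (θhat n ω) ^ (αhat n ω / α n)) ∧
    -- (ii) the tilted likelihood satisfies (A2) with the same `V` and `Δ n`
    (∀ r : ℝ, 0 < r → ∀ ε : ℝ, 0 < ε →
      Tendsto (fun n => P n {ω | ∃ h : EuclideanSpace ℝ (Fin p), ‖h‖ ≤ r ∧
        ε < |α n * (Real.log (L n ω (θstar + (Real.sqrt (α n * (n : ℝ)))⁻¹ • h)
                      ^ (αhat n ω / α n)) -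
                Real.log (L n ω θstar ^ (αhat n ω / α n)))
              - Real.sqrt (α n) *
                  ∑ i, ∑ j, h i * V i j * (Real.sqrt n * (θhat n ω j - θstar j))
              + (1 / 2) * ∑ i, ∑ j, h i * V i j * h j|}) atTop (nhds 0)) := by
  refine ⟨fun n ω θ hθ => Real.rpow_lt_rpow (hLpos n ω θ).le (hMLE n ω θ hθ)
    (div_pos (hαhatpos n ω) (hαpos n)), fun r hr => ?_⟩
  have hB := uniformlyBoundedInProb_lan_approx V (hα0.eventually (eventually_le_nhds one_pos))
    (hA0.boundedInProb hθmeas) r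
  simp only [PiLp.smul_apply, PiLp.sub_apply, smul_eq_mul] at hB
  have htilt (n : ℕ) (ω : Ω n) (θ θ' : EuclideanSpace ℝ (Fin p)) (c s q : ℝ) :
      α n * (Real.log (L n ω θ ^ c) - Real.log (L n ω θ' ^ c)) - s + q =
        c * (α n * (Real.log (L n ω θ) - Real.log (L n ω θ')) - s + q) + (c - 1) * (s - q) := by
    rw [Real.log_rpow (hLpos n ω θ), Real.log_rpow (hLpos n ω θ')]; ring
  simp only [htilt]
  exact UniformlyTendstoZeroInProb.mul_add_sub_one_mul (hA2.2.2 r hr) hratio hB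

/-- **Proposition C.5** (the tilted likelihood `f̃ = f^{α̂/α}` preserves the MLE and the
tempered LAN condition). -/
theorem tilted_likelihood_preserves_MLE_and_LAN
    {p : ℕ} {Ω : ℕ → Type} [∀ n, MeasurableSpace (Ω n)]
    (P : ∀ n, Measure (Ω n)) [∀ n, IsProbabilityMeasure (P n)]
    (L : ∀ n, Ω n → EuclideanSpace ℝ (Fin p) → ℝ)
    (θhat : ∀ n, Ω n → EuclideanSpace ℝ (Fin p))
    (θstar : EuclideanSpace ℝ (Fin p))
    (V : Matrix (Fin p) (Fin p) ℝ)
    (α : ℕ → ℝ) (αhat : ∀ n, Ω n → ℝ)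
    (hLmeas : ∀ n, Measurable (Function.uncurry (L n)))
    (hLpos : ∀ n ω θ, 0 < L n ω θ)
    (hθmeas : ∀ n, Measurable (θhat n))
    (hMLE : ∀ n ω θ, θ ≠ θhat n ω → L n ω θ < L n ω (θhat n ω))
    -- tempering sequence: `α n → 0` and `α n * n → ∞`
    (hαpos : ∀ n, 0 < α n)
    (hα0 : Tendsto α atTop (nhds 0))
    (hαn : Tendsto (fun n => α n * (n : ℝ)) atTop atTop)
    -- data-dependent tempering with `αhat / α → 1` in probability
    (hαhatmeas : ∀ n, Measurable (αhat n))
    (hαhatpos : ∀ n ω, 0 < αhat n ω)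
    (hratio : TendstoInProb P (fun n ω => αhat n ω / α n) (1 : ℝ))
    -- assumptions (A0) and (A2) for `f_n`
    (hA0 : A0 P θhat θstar)
    (hA2 : A2 P L θhat θstar α V) :
    -- (i) `θ̂` is the unique maximizer of the tilted likelihood
    (∀ n ω θ, θ ≠ θhat n ω →
      L n ω θ ^ (αhat n ω / α n) < L n ω (θhat n ω) ^ (αhat n ω / α n)) ∧
    -- (ii) the tilted likelihood satisfies (A2) with the same `V` and `Δ n`
    (∀ r : ℝ, 0 < r → ∀ ε : ℝ, 0 < ε →
      Tendsto (fun n => P n {ω | ∃ h : EuclideanSpace ℝ (Fin p), ‖h‖ ≤ r ∧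
        ε < |α n * (Real.log (L n ω (θstar + (Real.sqrt (α n * (n : ℝ)))⁻¹ • h)
                      ^ (αhat n ω / α n)) -
                Real.log (L n ω θstar ^ (αhat n ω / α n)))
              - Real.sqrt (α n) *
                  ∑ i, ∑ j, h i * V i j * (Real.sqrt n * (θhat n ω j - θstar j))
              + (1 / 2) * ∑ i, ∑ j, h i * V i j * h j|}) atTop (nhds 0)) :=
  tilted_likelihood_preserves_MLE_and_LAN_general P L θhat θstar V α αhat hLpos hθmeas hMLE hαpos
    hα0 hαhatpos hratio hA0 hA2
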